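/- Let C be a circle packing of a graph G' in the unit disc with associated embedding z (sending each vertex to the center of its circle), and suppose G' has maximum degree D. Then the Dirichlet energy of each coordinate of z is finite; in fact E(z₁) + E(z₂) ≤ 4D Σ_v r(v)² ≤ 4D/π · Area(𝔻) < ∞, where r(v) is the radius of the circle of v. -/

import Mathlib

/-!
Tangency gives `|z u - z v|² = (r u + r v)² ≤ 2 r(u)² + 2 r(v)²`, so summing over edges bounds
the two coordinate energies together by `Σ_v deg(v) · 2 r(v)² ≤ 4D Σ_v r(v)²`. The open discs
are disjoint and lie in the unit disc, so comparing areas gives `π Σ_v r(v)² ≤ π`.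
-/

open scoped Classical

open ENNReal

/-- Dirichlet energy with unit conductances (sum over ordered pairs, hence the 1/2). -/
noncomputable def dirichletEnergy {V : Type*} (G : SimpleGraph V) (f : V → ℝ) : ℝ≥0∞ :=
  (1 / 2) * ∑' p : V × V,
    if G.Adj p.1 p.2 then ENNReal.ofReal ((f p.1 - f p.2) ^ 2) else 0

open MeasureTheory

theorem tsum_ofReal_sq_le_of_pairwise_disjoint_balls {ι : Type*} (c : ι → ℂ) (r : ι → ℝ)
    (hr : ∀ i, 0 ≤ r i)
    (hdisj : Pairwise fun i j => Disjoint (Metric.ball (c i) (r i)) (Metric.ball (c j) (r j)))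
    (a : ℂ) (R : ℝ) (hsub : ∀ i, Metric.ball (c i) (r i) ⊆ Metric.closedBall a R) :
    ∑' i, ENNReal.ofReal (r i ^ 2) ≤ ENNReal.ofReal R ^ 2 := by
  have hvol : ∑' i, volume (Metric.ball (c i) (r i)) ≤ volume (Metric.closedBall a R) :=
    (tsum_meas_le_meas_iUnion_of_disjoint volume (fun _ => Metric.isOpen_ball.measurableSet)
      hdisj).trans (measure_mono (Set.iUnion_subset hsub))
  have hpi : (NNReal.pi : ℝ≥0∞) ≠ 0 := ENNReal.coe_ne_zero.mpr NNReal.pi_pos.ne'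
  simp only [Complex.volume_ball, Complex.volume_closedBall, ENNReal.tsum_mul_right] at hvol
  simpa only [ENNReal.ofReal_pow (hr _)] using
    (ENNReal.mul_le_mul_iff_left hpi ENNReal.coe_ne_top).mp hvol

theorem ENNReal.ofReal_add_sq_le (a b : ℝ) :
    ENNReal.ofReal ((a + b) ^ 2) ≤ 2 * ENNReal.ofReal (a ^ 2) + 2 * ENNReal.ofReal (b ^ 2) := by
  rw [← ENNReal.ofReal_ofNat 2, ← ENNReal.ofReal_mul zero_le_two,
    ← ENNReal.ofReal_mul zero_le_two, ← ENNReal.ofReal_add (by positivity) (by positivity)]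
  exact ENNReal.ofReal_le_ofReal (by nlinarith [sq_nonneg (a - b)])

theorem dirichletEnergy_re_add_dirichletEnergy_im {V : Type*} (G : SimpleGraph V) (f : V → ℂ) :
    dirichletEnergy G (fun v => (f v).re) + dirichletEnergy G (fun v => (f v).im) =
      1 / 2 * ∑' p : V × V,
        if G.Adj p.1 p.2 then ENNReal.ofReal (dist (f p.1) (f p.2) ^ 2) else 0 := by
  rw [dirichletEnergy, dirichletEnergy, ← mul_add, ← ENNReal.tsum_add]
  congr 1
  refine tsum_congr fun p => ?_
  split_ifs
  · rw [← ENNReal.ofReal_add (sq_nonneg _) (sq_nonneg _), Complex.dist_eq_re_im,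
      Real.sq_sqrt (by positivity)]
  · rw [add_zero]

namespace SimpleGraph

variable {V : Type*} (G : SimpleGraph V) [∀ v, Fintype (G.neighborSet v)]

theorem tsum_ite_adj_eq_tsum_degree_mul (g : V → ℝ≥0∞) :
    ∑' p : V × V, (if G.Adj p.1 p.2 then g p.1 else 0) = ∑' v, G.degree v * g v := by
  rw [ENNReal.tsum_prod (f := fun u v => if G.Adj u v then g u else 0)]
  refine tsum_congr fun u => ?_
  rw [tsum_eq_sum (s := G.neighborFinset u) fun v hv => if_neg (by simpa using hv),
    ← G.card_neighborFinset_eq_degree, ← nsmul_eq_mul, ← Finset.sum_const]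
  exact Finset.sum_congr rfl fun v hv => if_pos ((G.mem_neighborFinset u v).mp hv)

theorem tsum_ite_adj_add_le_of_degree_le (D : ℕ) (hdeg : ∀ v, G.degree v ≤ D)
    (g : V → ℝ≥0∞) :
    ∑' p : V × V, (if G.Adj p.1 p.2 then g p.1 + g p.2 else 0) ≤ 2 * D * ∑' v, g v := by
  have hswap : ∑' p : V × V, (if G.Adj p.1 p.2 then g p.2 else 0) =
      ∑' p : V × V, (if G.Adj p.1 p.2 then g p.1 else 0) :=
    ((Equiv.prodComm V V).tsum_eq _).symm.trans
      (tsum_congr fun p => if_congr (G.adj_comm _ _) rfl rfl)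
  have hfst : ∑' p : V × V, (if G.Adj p.1 p.2 then g p.1 else 0) ≤ D * ∑' v, g v := by
    rw [tsum_ite_adj_eq_tsum_degree_mul, ← ENNReal.tsum_mul_left]
    exact ENNReal.tsum_le_tsum fun v => by gcongr; exact_mod_cast hdeg v
  calc ∑' p : V × V, (if G.Adj p.1 p.2 then g p.1 + g p.2 else 0)
      = ∑' p : V × V, ((if G.Adj p.1 p.2 then g p.1 else 0) +
          if G.Adj p.1 p.2 then g p.2 else 0) :=
        tsum_congr fun p => by split_ifs <;> simp
    _ ≤ 2 * D * ∑' v, g v := by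
        rw [ENNReal.tsum_add, hswap, ← two_mul, mul_assoc]
        gcongr

end SimpleGraph

/-- For a circle packing of a graph `G'` of maximum degree `D` in the unit
disc, with embedding `z` (centres) and radii `r`, the Dirichlet energy of each coordinate
of `z` is finite; in fact `E(z₁) + E(z₂) ≤ 4D Σ_v r(v)² ≤ 4D` (since `Σ r² ≤ Area(𝔻)/π = 1`). -/
theorem circlePacking_embedding_finite_energy {V : Type*} (G : SimpleGraph V)
    [∀ v, Fintype (G.neighborSet v)]
    (z : V → ℂ) (r : V → ℝ) (hr : ∀ v, 0 < r v)
    (hdisc : ∀ v, ‖z v‖ + r v ≤ 1)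
    (htangent : ∀ u v, G.Adj u v → dist (z u) (z v) = r u + r v)
    (hdisjoint : ∀ u v, u ≠ v → r u + r v ≤ dist (z u) (z v))
    (D : ℕ) (hdeg : ∀ v, G.degree v ≤ D) :
    dirichletEnergy G (fun v => (z v).re) + dirichletEnergy G (fun v => (z v).im)
        ≤ 4 * (D : ℝ≥0∞) * ∑' v, ENNReal.ofReal (r v ^ 2)
      ∧ (∑' v, ENNReal.ofReal (r v ^ 2)) ≤ 1
      ∧ dirichletEnergy G (fun v => (z v).re) + dirichletEnergy G (fun v => (z v).im) < ⊤ := by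
  have harea : ∑' v, ENNReal.ofReal (r v ^ 2) ≤ 1 := by
    simpa using tsum_ofReal_sq_le_of_pairwise_disjoint_balls z r (fun v => (hr v).le)
      (fun u v huv => Metric.ball_disjoint_ball (hdisjoint u v huv)) 0 1 fun v =>
        Metric.ball_subset_closedBall.trans
          (Metric.closedBall_subset_closedBall' (by simpa [add_comm] using hdisc v))
  have henergy : dirichletEnergy G (fun v => (z v).re) + dirichletEnergy G (fun v => (z v).im)
      ≤ 4 * (D : ℝ≥0∞) * ∑' v, ENNReal.ofReal (r v ^ 2) := by
    rw [dirichletEnergy_re_add_dirichletEnergy_im]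
    calc _ ≤ ∑' p : V × V,
            if G.Adj p.1 p.2 then ENNReal.ofReal (dist (z p.1) (z p.2) ^ 2) else 0 :=
          mul_le_of_le_one_left' (by norm_num)
      _ ≤ ∑' p : V × V, if G.Adj p.1 p.2 then
            2 * ENNReal.ofReal (r p.1 ^ 2) + 2 * ENNReal.ofReal (r p.2 ^ 2) else 0 :=
          ENNReal.tsum_le_tsum fun p => by
            split_ifs with hadj
            · exact htangent _ _ hadj ▸ ofReal_add_sq_le _ _
            · exact le_rfl
      _ ≤ 2 * D * ∑' v, 2 * ENNReal.ofReal (r v ^ 2) :=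
          G.tsum_ite_adj_add_le_of_degree_le D hdeg _
      _ = 4 * D * ∑' v, ENNReal.ofReal (r v ^ 2) := by
          rw [ENNReal.tsum_mul_left]; ring
  refine ⟨henergy, harea, henergy.trans_lt ?_⟩
  calc 4 * (D : ℝ≥0∞) * ∑' v, ENNReal.ofReal (r v ^ 2) ≤ 4 * D * 1 := by gcongr
    _ < ⊤ := by
        rw [mul_one]
        exact ENNReal.mul_lt_top ENNReal.ofNat_lt_top (ENNReal.natCast_lt_top D)
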